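/- For an integer h ≥ 2, ∫_{-1/2}^{1/2} ∫_{-1/2}^{1/2} |t1| · E_h⁺(t1) E_h⁺(t2) E_h⁺(t1+t2) dt1 dt2 ≪ (log h)², where E_h⁺(t) = 1/(1/h + ‖t‖). -/

import Mathlib

noncomputable def nint (t : ℝ) : ℝ := |t - round t|
noncomputable def Ehp (h : ℕ) (t : ℝ) : ℝ := 1 / (1 / (h : ℝ) + nint t)

open MeasureTheory Real Set

lemma nint_nonneg (t : ℝ) : 0 ≤ nint t := abs_nonneg _

lemma measurable_nint : Measurable nint := by
  have hr : Measurable fun t : ℝ => ((round t : ℤ) : ℝ) := by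
    simp_rw [round_eq]
    exact (measurable_from_top (f := (Int.cast : ℤ → ℝ))).comp
      (Int.measurable_floor.comp (measurable_id.add_const _))
  exact (measurable_id.sub hr).abs

lemma nint_periodic : Function.Periodic nint 1 := fun t => by
  simp only [nint, round_add_one]
  push_cast
  ring_nf

lemma nint_eq_abs {t : ℝ} (ht : |t| ≤ 1/2) : nint t = |t| := by
  obtain ⟨h1, h2⟩ := abs_le.1 ht
  rcases eq_or_lt_of_le h2 with h | h
  · subst h
    norm_num [nint, round_eq]
  · have : round t = 0 := by
      rw [round_eq, Int.floor_eq_zero_iff]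
      constructor
      · simp; linarith
      · simp; linarith
    simp [nint, this]

section

variable {h : ℕ}

lemma hpos (hh : 2 ≤ h) : (0:ℝ) < (h:ℝ) := by
  have : (2:ℝ) ≤ (h:ℝ) := by exact_mod_cast hh
  linarith

lemma denom_pos (hh : 2 ≤ h) (t : ℝ) : 0 < 1/(h:ℝ) + nint t := by
  have h1 := hpos hh
  have h2 := nint_nonneg t
  positivity

lemma Ehp_pos (hh : 2 ≤ h) (t : ℝ) : 0 < Ehp h t := by
  have := denom_pos hh t; rw [Ehp]; positivity

lemma Ehp_le (hh : 2 ≤ h) (t : ℝ) : Ehp h t ≤ (h:ℝ) := by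
  rw [Ehp, div_le_iff₀ (denom_pos hh t)]
  have h1 := hpos hh
  have h2 := nint_nonneg t
  have h3 : (1/(h:ℝ)) * (h:ℝ) = 1 := by field_simp
  nlinarith

lemma measurable_Ehp : Measurable (Ehp h) := by
  have : Ehp h = fun t => (1/(h:ℝ) + nint t)⁻¹ := by
    funext t; rw [Ehp, one_div]
  rw [this]
  exact (measurable_const.add measurable_nint).inv

lemma Ehp_periodic : Function.Periodic (Ehp h) 1 := fun t => by
  simp [Ehp, nint_periodic t]

lemma key_abs_mul (hh : 2 ≤ h) {t : ℝ} (ht : |t| ≤ 1/2) : |t| * Ehp h t ≤ 1 := by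
  rw [Ehp, nint_eq_abs ht, mul_one_div, div_le_one (by rw [← nint_eq_abs ht]; exact denom_pos hh t)]
  have := hpos hh
  have : (0:ℝ) < 1/(h:ℝ) := by positivity
  linarith

lemma I_le (hh : 2 ≤ h) :
    (∫ t in (-(1:ℝ)/2)..(1/2), Ehp h t) ≤ 2 * Real.log h := by
  have hp := hpos hh
  have hε : (0:ℝ) < 1/(h:ℝ) := by positivity
  have habs : ∀ t ∈ Set.uIcc (-(1:ℝ)/2) (1/2), Ehp h t = 1/(1/(h:ℝ) + |t|) := by
    intro t ht
    rw [Set.uIcc_of_le (by norm_num : -(1:ℝ)/2 ≤ 1/2)] at ht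
    rw [Ehp, nint_eq_abs (abs_le.2 ⟨by linarith [ht.1], by linarith [ht.2]⟩)]
  rw [intervalIntegral.integral_congr habs]
  have hcont : Continuous fun t : ℝ => 1/(1/(h:ℝ) + |t|) := by
    apply Continuous.div continuous_const (continuous_const.add continuous_abs)
    intro t
    have := abs_nonneg t
    exact (add_pos_of_pos_of_nonneg hε this).ne'
  have hsplit : (∫ t in (-(1:ℝ)/2)..(1/2), 1/(1/(h:ℝ) + |t|))
      = (∫ t in (-(1:ℝ)/2)..(0:ℝ), 1/(1/(h:ℝ) + |t|))
        + ∫ t in (0:ℝ)..(1/2), 1/(1/(h:ℝ) + |t|) := by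
    rw [intervalIntegral.integral_add_adjacent_intervals
      (hcont.intervalIntegrable _ _) (hcont.intervalIntegrable _ _)]
  have hhalf : (∫ t in (0:ℝ)..(1/2), 1/(1/(h:ℝ) + |t|)) = Real.log ((1/2 + 1/(h:ℝ))/(1/(h:ℝ))) := by
    have e1 : (∫ t in (0:ℝ)..(1/2), 1/(1/(h:ℝ) + |t|)) = ∫ t in (0:ℝ)..(1/2), 1/(t + 1/(h:ℝ)) := by
      apply intervalIntegral.integral_congr
      intro t ht
      rw [Set.uIcc_of_le (by norm_num : (0:ℝ) ≤ 1/2)] at ht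
      simp only
      rw [abs_of_nonneg ht.1, add_comm]
    rw [e1, intervalIntegral.integral_comp_add_right (fun x => 1/x) (1/(h:ℝ)),
      integral_one_div]
    · norm_num
    · intro hmem
      rw [Set.uIcc_of_le (by linarith : (0:ℝ) + 1/(h:ℝ) ≤ 1/2 + 1/(h:ℝ))] at hmem
      have := hmem.1
      simp at this
      linarith
  have hneg : (∫ t in (-(1:ℝ)/2)..(0:ℝ), 1/(1/(h:ℝ) + |t|))
      = ∫ t in (0:ℝ)..(1/2), 1/(1/(h:ℝ) + |t|) := by
    have e1 : (∫ t in (-(1:ℝ)/2)..(0:ℝ), 1/(1/(h:ℝ) + |t|))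
        = ∫ t in (-(1:ℝ)/2)..(0:ℝ), (fun u => 1/(1/(h:ℝ) + |u|)) (-t) := by
      apply intervalIntegral.integral_congr
      intro t ht
      simp [abs_neg]
    rw [e1, intervalIntegral.integral_comp_neg (fun u => 1/(1/(h:ℝ) + |u|))]
    norm_num
  rw [hsplit, hneg, hhalf]
  have harg : (1/2 + 1/(h:ℝ))/(1/(h:ℝ)) = (h:ℝ)/2 + 1 := by
    field_simp
  rw [harg]
  have h2 : (2:ℝ) ≤ (h:ℝ) := by exact_mod_cast hh
  have hlog : Real.log ((h:ℝ)/2 + 1) ≤ Real.log h := by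
    apply Real.log_le_log (by linarith)
    linarith
  linarith

end

section
variable {h : ℕ}

lemma main_bound (hh : 2 ≤ h) :
    (∫ t1 in (-(1:ℝ)/2)..(1/2), ∫ t2 in (-(1:ℝ)/2)..(1/2),
        |t1| * (Ehp h t1 * Ehp h t2 * Ehp h (t1 + t2)))
      ≤ 4 * (Real.log h) ^ 2 := by
  have hab : (-(1:ℝ)/2) ≤ 1/2 := by norm_num
  have hp := hpos hh
  set S : Set ℝ := Ioc (-(1:ℝ)/2) (1/2) with hS
  set μ := volume.restrict S with hμ
  haveI : IsFiniteMeasure μ := ⟨by rw [hμ, Measure.restrict_apply_univ]; exact measure_Ioc_lt_top⟩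
  have m2 : Measurable fun p : ℝ × ℝ => Ehp h p.2 * Ehp h (p.1 + p.2) :=
    (measurable_Ehp.comp measurable_snd).mul
      (measurable_Ehp.comp (measurable_fst.add measurable_snd))
  have m1 : Measurable fun p : ℝ × ℝ => |p.1| * (Ehp h p.1 * Ehp h p.2 * Ehp h (p.1 + p.2)) :=
    measurable_fst.abs.mul
      (((measurable_Ehp.comp measurable_fst).mul (measurable_Ehp.comp measurable_snd)).mul
        (measurable_Ehp.comp (measurable_fst.add measurable_snd)))
  have haeS : ∀ᵐ p : ℝ × ℝ ∂(μ.prod μ), p ∈ S ×ˢ S := by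
    rw [hμ, Measure.prod_restrict]
    exact ae_restrict_mem (measurableSet_Ioc.prod measurableSet_Ioc)
  have hE2nonneg : ∀ p : ℝ × ℝ, 0 ≤ Ehp h p.2 * Ehp h (p.1 + p.2) := fun p =>
    mul_nonneg (Ehp_pos hh _).le (Ehp_pos hh _).le
  have hE2le : ∀ p : ℝ × ℝ, Ehp h p.2 * Ehp h (p.1 + p.2) ≤ (h:ℝ) * h := fun p =>
    mul_le_mul (Ehp_le hh _) (Ehp_le hh _) (Ehp_pos hh _).le hp.le
  have i2 : Integrable (fun p : ℝ × ℝ => Ehp h p.2 * Ehp h (p.1 + p.2)) (μ.prod μ) := by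
    apply Integrable.mono' (integrable_const ((h:ℝ) * h)) m2.aestronglyMeasurable
    filter_upwards with p
    rw [Real.norm_eq_abs, abs_of_nonneg (hE2nonneg p)]
    exact hE2le p
  have i1 : Integrable
      (fun p : ℝ × ℝ => |p.1| * (Ehp h p.1 * Ehp h p.2 * Ehp h (p.1 + p.2))) (μ.prod μ) := by
    apply Integrable.mono' (integrable_const ((h:ℝ) * h)) m1.aestronglyMeasurable
    filter_upwards [haeS] with p hpS
    have h1 : |p.1| ≤ 1/2 := abs_le.2 ⟨by linarith [hpS.1.1], by linarith [hpS.1.2]⟩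
    have hnn : 0 ≤ |p.1| * (Ehp h p.1 * Ehp h p.2 * Ehp h (p.1 + p.2)) := by
      have := Ehp_pos hh p.1; have := Ehp_pos hh p.2; have := Ehp_pos hh (p.1 + p.2)
      positivity
    rw [Real.norm_eq_abs, abs_of_nonneg hnn]
    calc |p.1| * (Ehp h p.1 * Ehp h p.2 * Ehp h (p.1 + p.2))
        = (|p.1| * Ehp h p.1) * (Ehp h p.2 * Ehp h (p.1 + p.2)) := by ring
      _ ≤ 1 * ((h:ℝ) * h) :=
          mul_le_mul (key_abs_mul hh h1) (hE2le p) (hE2nonneg p)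
            (by norm_num)
      _ = (h:ℝ) * h := one_mul _
  have hle : (fun p : ℝ × ℝ => |p.1| * (Ehp h p.1 * Ehp h p.2 * Ehp h (p.1 + p.2)))
      ≤ᵐ[μ.prod μ] fun p => Ehp h p.2 * Ehp h (p.1 + p.2) := by
    filter_upwards [haeS] with p hpS
    have h1 : |p.1| ≤ 1/2 := abs_le.2 ⟨by linarith [hpS.1.1], by linarith [hpS.1.2]⟩
    calc |p.1| * (Ehp h p.1 * Ehp h p.2 * Ehp h (p.1 + p.2))
        = (|p.1| * Ehp h p.1) * (Ehp h p.2 * Ehp h (p.1 + p.2)) := by ring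
      _ ≤ 1 * (Ehp h p.2 * Ehp h (p.1 + p.2)) :=
          mul_le_mul_of_nonneg_right (key_abs_mul hh h1) (hE2nonneg p)
      _ = Ehp h p.2 * Ehp h (p.1 + p.2) := one_mul _
  set I := ∫ t in (-(1:ℝ)/2)..(1/2), Ehp h t with hIdef
  have hI0 : 0 ≤ I := intervalIntegral.integral_nonneg hab fun t _ => (Ehp_pos hh t).le
  have hIle : I ≤ 2 * Real.log h := I_le hh
  have h2r : (2:ℝ) ≤ (h:ℝ) := by exact_mod_cast hh
  have hlog0 : 0 ≤ Real.log h := Real.log_nonneg (by linarith)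
  have inner_eq : ∀ t2 : ℝ, (∫ t1, Ehp h t2 * Ehp h (t1 + t2) ∂μ) = Ehp h t2 * I := by
    intro t2
    rw [integral_const_mul]
    congr 1
    have e0 : (∫ t1, Ehp h (t1 + t2) ∂μ) = ∫ t1 in (-(1:ℝ)/2)..(1/2), Ehp h (t1 + t2) :=
      (intervalIntegral.integral_of_le hab).symm
    rw [e0, intervalIntegral.integral_comp_add_right (fun x => Ehp h x) t2]
    have e1 : (1:ℝ)/2 + t2 = (-(1:ℝ)/2 + t2) + 1 := by ring
    have e2 : (1:ℝ)/2 = -(1:ℝ)/2 + 1 := by norm_num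
    rw [hIdef, e1, e2]
    exact (Ehp_periodic (h := h)).intervalIntegral_add_eq _ _
  calc (∫ t1 in (-(1:ℝ)/2)..(1/2), ∫ t2 in (-(1:ℝ)/2)..(1/2),
          |t1| * (Ehp h t1 * Ehp h t2 * Ehp h (t1 + t2)))
      = ∫ p, |p.1| * (Ehp h p.1 * Ehp h p.2 * Ehp h (p.1 + p.2)) ∂(μ.prod μ) := by
        simp_rw [intervalIntegral.integral_of_le hab]
        exact integral_integral i1
    _ ≤ ∫ p, Ehp h p.2 * Ehp h (p.1 + p.2) ∂(μ.prod μ) := integral_mono_ae i1 i2 hle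
    _ = ∫ t2, ∫ t1, Ehp h t2 * Ehp h (t1 + t2) ∂μ ∂μ :=
        integral_prod_symm _ i2
    _ = ∫ t2, Ehp h t2 * I ∂μ := by simp_rw [inner_eq]
    _ = I * I := by
        rw [integral_mul_const]
        congr 1
        exact (intervalIntegral.integral_of_le hab).symm
    _ ≤ (2 * Real.log h) * (2 * Real.log h) := mul_le_mul hIle hIle hI0 (by linarith)
    _ = 4 * (Real.log h) ^ 2 := by ring

end

theorem double_integral_abs_mul_Ehp_le :
    ∃ C > 0, ∀ h : ℕ, 2 ≤ h →
      (∫ t1 in (-(1:ℝ)/2)..(1/2), ∫ t2 in (-(1:ℝ)/2)..(1/2),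
          |t1| * (Ehp h t1 * Ehp h t2 * Ehp h (t1 + t2)))
        ≤ C * (Real.log h) ^ 2 := by
  exact ⟨4, by norm_num, fun h hh => main_bound hh⟩
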